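/- arXiv:2203.02476 — 2 statements merged into one kernel-verified Lean document; each statement's English description precedes it below -/
import Mathlib

section
/- Let A be a finite subset of the torus (ℤ/nℤ)^d with k = |A| elements, ordered as x_1, …, x_k greedily so that for each j, d(x_j, x_{j+1}) = min over i > j of d(x_j, x_i). Then for every integer L ≥ 1, the number of indices j in {1,…,k−1} with d(x_j, x_{j+1}) ≥ L is at most (2d²n/L)^d. -/
open scoped BigOperators

/-- One step of movement on the torus `(ℤ/nℤ)^d`. -/
def torusMove (d n : ℕ) (x : Fin d → ZMod n) (m : Fin d × Bool) : Fin d → ZMod n :=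
  Function.update x m.1 (x m.1 + if m.2 then 1 else -1)

/-- Position after performing the list of moves `l` starting from `x`. -/
def posAfter (d n : ℕ) (x : Fin d → ZMod n) (l : List (Fin d × Bool)) : Fin d → ZMod n :=
  l.foldl (torusMove d n) x

/-- Graph distance on the torus `(ℤ/nℤ)^d`. -/
noncomputable def tdist (d n : ℕ) (x y : Fin d → ZMod n) : ℕ :=
  sInf {L : ℕ | ∃ l : List (Fin d × Bool), l.length = L ∧ posAfter d n x l = y}

/-!
Greedy ordering turns the long jumps into a separated set: if `d(x_j, x_{j+1}) ≥ L` and `j < j'`,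
then `d(x_j, x_{j'}) ≥ d(x_j, x_{j+1}) ≥ L`. Cut each circle `ℤ/nℤ` into arcs of `r + 1`
consecutive residues with `d r < L`, i.e. `r = ⌊(L - 1)/d⌋`. Two points in the same product cell
are joined by a path of length at most `d r < L`, so a separated set meets each cell at most once,
and there are `⌈n/(r + 1)⌉^d ≤ (2dn/L)^d` cells, where the last inequality uses `L ≤ d(n - 1)`,
the diameter bound, to absorb the rounding.
-/

open Finset

section Torus

variable {d n : ℕ}

lemma posAfter_append (x : Fin d → ZMod n) (l₁ l₂ : List (Fin d × Bool)) :
    posAfter d n x (l₁ ++ l₂) = posAfter d n (posAfter d n x l₁) l₂ :=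
  List.foldl_append

lemma posAfter_replicate (x : Fin d → ZMod n) (i : Fin d) (b : Bool) (c : ℕ) :
    posAfter d n x (List.replicate c (i, b)) =
      Function.update x i (x i + c * if b then 1 else -1) := by
  induction c generalizing x with
  | zero => simp [posAfter]
  | succ c ih =>
    rw [List.replicate_succ', posAfter_append, ih]
    simp only [posAfter, List.foldl_cons, List.foldl_nil, torusMove, Function.update_idem,
      Function.update_self]
    push_cast
    ring_nf

lemma posAfter_replicate_natAbs (x : Fin d → ZMod n) (i : Fin d) (z : ℤ) :
    posAfter d n x (List.replicate z.natAbs (i, decide (0 ≤ z))) =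
      Function.update x i (x i + z) := by
  rw [posAfter_replicate, Nat.cast_natAbs]
  rcases le_or_gt 0 z with hz | hz
  · simp [hz, abs_of_nonneg hz]
  · simp [hz.not_ge, abs_of_neg hz]

lemma exists_posAfter_eq (z : Fin d → ℤ) (s : Finset (Fin d)) (x y : Fin d → ZMod n)
    (hout : ∀ i ∉ s, x i = y i) (hz : ∀ i ∈ s, (z i : ZMod n) = y i - x i) :
    ∃ l, posAfter d n x l = y ∧ l.length = ∑ i ∈ s, (z i).natAbs := by
  induction s using Finset.induction_on generalizing x with
  | empty => exact ⟨[], funext fun i => hout i (notMem_empty i), rfl⟩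
  | insert a s ha ih =>
    set x' := Function.update x a (y a)
    obtain ⟨l, hl, hlen⟩ := ih x'
      (fun i hi => by
        by_cases hia : i = a
        · subst hia; simp [x']
        · simpa [x', hia] using hout i (by simp [hia, hi]))
      (fun i hi => by
        have hia : i ≠ a := ne_of_mem_of_not_mem hi ha
        simpa [x', hia] using hz i (mem_insert_of_mem hi))
    refine ⟨List.replicate (z a).natAbs (a, decide (0 ≤ z a)) ++ l, ?_, ?_⟩
    · rw [posAfter_append, posAfter_replicate_natAbs, hz a (mem_insert_self a s),
        add_sub_cancel, hl]
    · simp [sum_insert ha, hlen]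

lemma tdist_le_sum_natAbs (x y : Fin d → ZMod n) (z : Fin d → ℤ)
    (hz : ∀ i, (z i : ZMod n) = y i - x i) :
    tdist d n x y ≤ ∑ i, (z i).natAbs := by
  obtain ⟨l, hl, hlen⟩ := exists_posAfter_eq z univ x y (by simp) (fun i _ => hz i)
  exact Nat.sInf_le ⟨l, hlen, hl⟩

lemma tdist_le_of_natAbs_val_sub_le [NeZero n] (x y : Fin d → ZMod n) (r : ℕ)
    (h : ∀ i, (((y i).val : ℤ) - (x i).val).natAbs ≤ r) :
    tdist d n x y ≤ d * r :=
  calc tdist d n x y ≤ ∑ i, (((y i).val : ℤ) - (x i).val).natAbs :=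
        tdist_le_sum_natAbs x y _ fun i => by simp
    _ ≤ ∑ _i : Fin d, r := sum_le_sum fun i _ => h i
    _ = d * r := by simp

lemma tdist_le_mul_sub_one [NeZero n] (x y : Fin d → ZMod n) :
    tdist d n x y ≤ d * (n - 1) :=
  tdist_le_of_natAbs_val_sub_le x y (n - 1) fun i => by
    have := (x i).val_lt
    have := (y i).val_lt
    omega

lemma natAbs_sub_lt_of_div_eq {a b m : ℕ} (hm : 0 < m) (h : a / m = b / m) :
    ((a : ℤ) - b).natAbs < m := by
  have ha := Nat.div_add_mod a m
  have hb := Nat.div_add_mod b m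
  rw [h] at ha
  have := Nat.mod_lt a hm
  have := Nat.mod_lt b hm
  omega

/-- Pigeonhole over the cells `∏ᵢ {c | (c i).val / (r + 1) = const}` of the torus. -/
lemma card_le_of_le_tdist {ι : Type*} [LinearOrder ι] [NeZero n]
    (S : Finset ι) (p : ι → Fin d → ZMod n) (L r : ℕ) (hr : d * r < L)
    (hsep : ∀ i ∈ S, ∀ j ∈ S, i < j → L ≤ tdist d n (p i) (p j)) :
    #S ≤ ((n - 1) / (r + 1) + 1) ^ d := by
  set cell : ι → Fin d → ℕ := fun i c => (p i c).val / (r + 1)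
  have hcell : ∀ i ∈ S, ∀ j ∈ S, i < j → cell i ≠ cell j := fun i hi j hj hij heq => by
    have hclose : tdist d n (p i) (p j) ≤ d * r :=
      tdist_le_of_natAbs_val_sub_le _ _ r fun c =>
        Nat.lt_succ_iff.mp (natAbs_sub_lt_of_div_eq r.succ_pos (congrFun heq c).symm)
    exact absurd (hsep i hi j hj hij) (by omega)
  have hmaps : Set.MapsTo cell S
      (Fintype.piFinset fun _ : Fin d => range ((n - 1) / (r + 1) + 1) : Set (Fin d → ℕ)) :=
    fun i _ => by
      simp only [cell, mem_coe, Fintype.mem_piFinset, mem_range]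
      exact fun c => Nat.lt_succ_of_le <| Nat.div_le_div_right (Nat.le_pred_of_lt (p i c).val_lt)
  have hinj : Set.InjOn cell S := fun i hi j hj heq => by
    rcases lt_trichotomy i j with hij | hij | hij
    · exact absurd heq (hcell i hi j hj hij)
    · exact hij
    · exact absurd heq.symm (hcell j hj i hi hij)
  simpa using card_le_card_of_injOn cell hmaps hinj

end Torus

lemma div_succ_add_one_mul_le (d n L : ℕ) (hL : 1 ≤ L) (hLd : L ≤ d * (n - 1)) :
    ((n - 1) / ((L - 1) / d + 1) + 1) * L ≤ 2 * d * n := by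
  have hd : 0 < d := Nat.pos_of_ne_zero fun h => by simp [h] at hLd; omega
  have hn : 0 < n := Nat.pos_of_ne_zero fun h => by simp [h] at hLd; omega
  have hLq : L ≤ d * ((L - 1) / d + 1) := by have := Nat.lt_mul_div_succ (L - 1) hd; omega
  have hqn : (L - 1) / d ≤ n - 1 := Nat.div_le_of_le_mul (by omega : L - 1 ≤ d * (n - 1))
  generalize (L - 1) / d = q at hLq hqn
  have hNq : (n - 1) / (q + 1) * (q + 1) ≤ n - 1 := Nat.div_mul_le_self _ _
  generalize (n - 1) / (q + 1) = N at hNq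
  calc (N + 1) * L ≤ (N + 1) * (d * (q + 1)) := Nat.mul_le_mul_left _ hLq
    _ = d * (N * (q + 1) + (q + 1)) := by ring
    _ ≤ d * ((n - 1) + n) := Nat.mul_le_mul_left _ (by omega)
    _ ≤ 2 * d * n := by
      rw [mul_comm 2 d, mul_assoc]
      exact Nat.mul_le_mul_left _ (by omega)

open Classical in
theorem stmt2_general (d n : ℕ) (hn : 1 ≤ n) (k : ℕ)
    (x : Fin k → Fin d → ZMod n)
    (hgreedy : ∀ (j i : Fin k) (h : (j : ℕ) + 1 < k), j < i →
      tdist d n (x j) (x ⟨(j : ℕ) + 1, h⟩) ≤ tdist d n (x j) (x i))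
    (L : ℕ) (hL : 1 ≤ L) :
    ((Finset.univ.filter (fun j : Fin k =>
        ∃ h : (j : ℕ) + 1 < k, L ≤ tdist d n (x j) (x ⟨(j : ℕ) + 1, h⟩))).card : ℝ)
      ≤ ((2 * d ^ 2 * n : ℝ) / L) ^ d := by
  have : NeZero n := ⟨by omega⟩
  set S := univ.filter fun j : Fin k =>
    ∃ h : (j : ℕ) + 1 < k, L ≤ tdist d n (x j) (x ⟨(j : ℕ) + 1, h⟩)
  have hsep : ∀ i ∈ S, ∀ j ∈ S, i < j → L ≤ tdist d n (x i) (x j) := fun i hi j _ hij => by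
    obtain ⟨h, hlong⟩ := (mem_filter.mp hi).2
    exact hlong.trans (hgreedy i j h hij)
  obtain hS | ⟨i, hi⟩ := S.eq_empty_or_nonempty
  · rw [hS, card_empty, Nat.cast_zero]
    positivity
  have hLd : L ≤ d * (n - 1) := by
    obtain ⟨_, hlong⟩ := (mem_filter.mp hi).2
    exact hlong.trans (tdist_le_mul_sub_one _ _)
  have hcard : #S ≤ ((n - 1) / ((L - 1) / d + 1) + 1) ^ d :=
    card_le_of_le_tdist S x L _ (by have := Nat.mul_div_le (L - 1) d; omega) hsep
  have hcells : ((n - 1) / ((L - 1) / d + 1) + 1) * L ≤ 2 * d ^ 2 * n :=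
    (div_succ_add_one_mul_le d n L hL hLd).trans (by gcongr; nlinarith)
  calc (#S : ℝ) ≤ (((n - 1) / ((L - 1) / d + 1) + 1 : ℕ) : ℝ) ^ d := mod_cast hcard
    _ ≤ ((2 * d ^ 2 * n : ℝ) / L) ^ d := by
      gcongr
      rw [le_div_iff₀ (by positivity)]
      exact_mod_cast hcells

open Classical in
/-- If `x_1, …, x_k` is a greedy ordering of a subset of the torus `(ℤ/nℤ)^d`
(each point is chosen among the remaining ones at minimal distance from the previous
point), then for every `L ≥ 1` the number of indices `j` with
`d(x_j, x_{j+1}) ≥ L` is at most `(2d²n/L)^d`. -/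
theorem stmt2 (d n : ℕ) (hd : 1 ≤ d) (hn : 1 ≤ n) (k : ℕ)
    (x : Fin k → Fin d → ZMod n) (hinj : Function.Injective x)
    (hgreedy : ∀ (j i : Fin k) (h : (j : ℕ) + 1 < k), j < i →
      tdist d n (x j) (x ⟨(j : ℕ) + 1, h⟩) ≤ tdist d n (x j) (x i))
    (L : ℕ) (hL : 1 ≤ L) :
    ((Finset.univ.filter (fun j : Fin k =>
        ∃ h : (j : ℕ) + 1 < k, L ≤ tdist d n (x j) (x ⟨(j : ℕ) + 1, h⟩))).card : ℝ)
      ≤ ((2 * d ^ 2 * n : ℝ) / L) ^ d :=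
  stmt2_general d n hn k x hgreedy L hL
end

section
/- For a birth-and-death Markov chain on {1,…,k+1} with upward probabilities p(j,j+1) = λ/(1+λ) for all 1 ≤ j ≤ k and downward probabilities p(j+1,j) = r_j/(1+λ) with r_j ∈ (0,1] for 1 ≤ j ≤ k−1, made reversible at k+1 with p(k+1,k) = λ/(1+λ), the reversibility measure satisfies ν(k+1) ≤ λ^{k−1} · ∏_{j=1}^{k−1} (1/r_j), and consequently the hitting time of k+1 started from 1 satisfies P_1(T_{k+1} ≤ M) ≤ M · λ^{k−1} · ∏_{j=1}^{k−1} (1/r_j) for every M ∈ ℕ. -/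
/-!
The downward probability below the top is `r_j/(1+λ)` and at the top it equals the upward one,
so the ratios `p(j,j+1)/p(j+1,j)` are `λ/r_j` for `j < k` and `1` for `j = k`; their product
`ν(k+1)` is exactly `λ^{k-1} ∏ 1/r_j`. For a tridiagonal chain `ν` satisfies detailed balance,
which passes to matrix powers: `ν(a) Pᵗ(a,b) = ν(b) Pᵗ(b,a) ≤ ν(b)`. A union bound over the times
`1, …, M` at which the path can visit `k+1` then gives
`P₁(T_{k+1} ≤ M) ≤ ∑_{t=1}^{M} Pᵗ(1,k+1) ≤ M ν(k+1)`, since `ν(1) = 1`.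
-/

open scoped BigOperators

/-- The probability, for the Markov chain with transition matrix `p` started at `a`,
that the first hitting time of `b` is at most `M`. -/
def hitProb {S : Type*} [Fintype S] [DecidableEq S] (p : S → S → ℝ) (a b : S)
    (M : ℕ) : ℝ :=
  ∑ f : Fin (M + 1) → S,
    if f 0 = a ∧ ∃ t : Fin (M + 1), 1 ≤ (t : ℕ) ∧ f t = b then
      ∏ i : Fin M, p (f i.castSucc) (f i.succ)
    else 0

open Finset Matrix

theorem sum_pi_fin_succ {α R : Type*} [Fintype α] [AddCommMonoid R] {n : ℕ}
    (F : (Fin (n + 1) → α) → R) :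
    ∑ f, F f = ∑ x, ∑ g : Fin n → α, F (Fin.cons x g) := by
  rw [← Fintype.sum_prod_type']
  exact (Fintype.sum_equiv (Fin.consEquiv fun _ => α) _ _ fun _ => rfl).symm

section PathWeight

variable {S R : Type*} [CommSemiring R] {p : S → S → R}

def pathWeight (p : S → S → R) {M : ℕ} (f : Fin (M + 1) → S) : R :=
  ∏ i : Fin M, p (f i.castSucc) (f i.succ)

theorem pathWeight_cons {M : ℕ} (x : S) (g : Fin (M + 1) → S) :
    pathWeight p (Fin.cons x g) = p x (g 0) * pathWeight p g := by
  simp [pathWeight, Fin.prod_univ_succ]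

variable [Fintype S]

theorem sum_pathWeight_cons (hst : ∀ a, ∑ b, p a b = 1) (M : ℕ) (a : S) :
    ∑ g : Fin M → S, pathWeight p (Fin.cons a g) = 1 := by
  induction M generalizing a with
  | zero => simp [pathWeight]
  | succ M ih =>
    simp_rw [sum_pi_fin_succ, pathWeight_cons, Fin.cons_zero, ← mul_sum, ih, mul_one, hst]

variable [DecidableEq S]

theorem sum_pathWeight_cons_ite_eq_pow (hst : ∀ a, ∑ b, p a b = 1) {M : ℕ} (a b : S)
    (s : Fin M) :
    ∑ g : Fin M → S, (if g s = b then pathWeight p (Fin.cons a g) else 0)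
      = (of p ^ ((s : ℕ) + 1)) a b := by
  induction M generalizing a with
  | zero => exact s.elim0
  | succ M ih =>
    rw [sum_pi_fin_succ]
    induction s using Fin.cases with
    | zero =>
      simp [pathWeight_cons, ← mul_sum, sum_pathWeight_cons hst]
    | succ s =>
      simp_rw [Fin.cons_succ, pathWeight_cons, Fin.cons_zero, ← mul_ite_zero, ← mul_sum, ih]
      rw [Fin.val_succ, pow_succ' _ ((s : ℕ) + 1), mul_apply]
      rfl

end PathWeight

section Reversible

variable {S : Type*} [Fintype S] [DecidableEq S] {p : S → S → ℝ}

theorem hitProb_le_sum_pow (hp : ∀ a b, 0 ≤ p a b) (hst : ∀ a, ∑ b, p a b = 1)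
    (a b : S) (M : ℕ) :
    hitProb p a b M ≤ ∑ s : Fin M, (of p ^ ((s : ℕ) + 1)) a b := by
  have hit_eq : hitProb p a b M
      = ∑ g : Fin M → S, if ∃ s, g s = b then pathWeight p (Fin.cons a g) else 0 := by
    rw [hitProb, sum_pi_fin_succ, Fintype.sum_eq_single a fun x hx => by simp [hx]]
    simp [Fin.exists_fin_succ, pathWeight]
  calc hitProb p a b M
      ≤ ∑ g : Fin M → S, ∑ s, if g s = b then pathWeight p (Fin.cons a g) else 0 := by
        rw [hit_eq]
        refine sum_le_sum fun g _ => ?_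
        have hW : 0 ≤ pathWeight p (Fin.cons a g) := prod_nonneg fun _ _ => hp _ _
        split_ifs with hg
        · obtain ⟨s, hs⟩ := hg
          exact single_le_sum (f := fun s => if g s = b then _ else 0)
            (fun _ _ => by positivity) (mem_univ s) |>.trans_eq' (if_pos hs)
        · exact sum_nonneg fun _ _ => by positivity
    _ = ∑ s : Fin M, (of p ^ ((s : ℕ) + 1)) a b := by
        rw [sum_comm]
        exact sum_congr rfl fun s _ => sum_pathWeight_cons_ite_eq_pow hst a b s

theorem mul_pow_apply_eq_of_detailed_balance {R : Type*} [CommSemiring R] (ν : S → R)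
    (P : Matrix S S R) (hν : ∀ a b, ν a * P a b = ν b * P b a) (n : ℕ) (a b : S) :
    ν a * (P ^ n) a b = ν b * (P ^ n) b a := by
  have h : SemiconjBy (diagonal ν) P Pᵀ := by
    ext a b
    simp [diagonal_mul, mul_diagonal, hν, mul_comm]
  have := congrFun₂ (h.pow_right n) a b
  rwa [← transpose_pow, diagonal_mul, mul_diagonal, transpose_apply, mul_comm _ (ν b)] at this

theorem mul_hitProb_le_of_detailed_balance (hp : ∀ a b, 0 ≤ p a b)
    (hst : ∀ a, ∑ b, p a b = 1) (ν : S → ℝ) (hν0 : ∀ a, 0 ≤ ν a)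
    (hν : ∀ a b, ν a * p a b = ν b * p b a) (a b : S) (M : ℕ) :
    ν a * hitProb p a b M ≤ M * ν b := by
  have hP : of p ∈ rowStochastic ℝ S := mem_rowStochastic_iff_sum.2 ⟨hp, hst⟩
  calc ν a * hitProb p a b M
      ≤ ν a * ∑ s : Fin M, (of p ^ ((s : ℕ) + 1)) a b :=
        mul_le_mul_of_nonneg_left (hitProb_le_sum_pow hp hst a b M) (hν0 a)
    _ = ∑ s : Fin M, ν b * (of p ^ ((s : ℕ) + 1)) b a := by
        rw [mul_sum]
        exact sum_congr rfl fun s _ => mul_pow_apply_eq_of_detailed_balance ν (of p) hν _ a b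
    _ ≤ ∑ _s : Fin M, ν b :=
        sum_le_sum fun s _ => mul_le_of_le_one_right (hν0 b)
          (le_one_of_mem_rowStochastic (pow_mem hP _))
    _ = M * ν b := by simp

end Reversible

section BirthDeath

variable {k : ℕ} {p : Fin (k + 1) → Fin (k + 1) → ℝ}

/-- The paper's `ν`, shifted by one: `reversibilityMeasure p j = ν (j + 1)`. -/
noncomputable def reversibilityMeasure (p : Fin (k + 1) → Fin (k + 1) → ℝ) : Fin (k + 1) → ℝ :=
  Fin.partialProd fun i : Fin k => p i.castSucc i.succ / p i.succ i.castSucc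

theorem reversibilityMeasure_zero (p : Fin (k + 1) → Fin (k + 1) → ℝ) :
    reversibilityMeasure p 0 = 1 :=
  Fin.partialProd_zero _

theorem reversibilityMeasure_last (p : Fin (k + 1) → Fin (k + 1) → ℝ) :
    reversibilityMeasure p (Fin.last k)
      = ∏ i : Fin k, p i.castSucc i.succ / p i.succ i.castSucc := by
  rw [reversibilityMeasure, Fin.partialProd, Fin.val_last,
    List.take_of_length_le (List.length_ofFn ..).le, List.prod_ofFn]

theorem reversibilityMeasure_nonneg (hp : ∀ a b, 0 ≤ p a b) (j : Fin (k + 1)) :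
    0 ≤ reversibilityMeasure p j := by
  induction j using Fin.induction with
  | zero => simp [reversibilityMeasure]
  | succ i ih =>
    rw [reversibilityMeasure, Fin.partialProd_succ]
    exact mul_nonneg ih (div_nonneg (hp _ _) (hp _ _))

theorem reversibilityMeasure_detailed_balance
    (hbd : ∀ a b : Fin (k + 1), (a : ℕ) ≠ b → (a : ℕ) + 1 ≠ b → (b : ℕ) + 1 ≠ a → p a b = 0)
    (hdown : ∀ i : Fin k, p i.succ i.castSucc ≠ 0) (a b : Fin (k + 1)) :
    reversibilityMeasure p a * p a b = reversibilityMeasure p b * p b a := by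
  wlog hab : (a : ℕ) ≤ b generalizing a b
  · exact (this b a (by omega)).symm
  obtain hab | hab | hab : (a : ℕ) = b ∨ (a : ℕ) + 1 = b ∨ (a : ℕ) + 1 < b := by omega
  · rw [Fin.ext hab]
  · obtain ⟨i, rfl, rfl⟩ : ∃ i : Fin k, a = i.castSucc ∧ b = i.succ :=
      ⟨⟨a, by omega⟩, rfl, Fin.ext hab.symm⟩
    rw [reversibilityMeasure, Fin.partialProd_succ, mul_assoc, div_mul_cancel₀ _ (hdown i)]
  · rw [hbd a b (by omega) (by omega) (by omega), hbd b a (by omega) (by omega) (by omega),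
      mul_zero, mul_zero]

theorem prod_birthDeath_ratio_eq (lam : ℝ) (hlam : 0 < lam) (r : ℕ → ℝ)
    (hup : ∀ i : Fin k, p i.castSucc i.succ = lam / (1 + lam))
    (hdown : ∀ i : Fin k, (i : ℕ) + 1 ≤ k - 1 →
      p i.succ i.castSucc = r ((i : ℕ) + 1) / (1 + lam))
    (htop : ∀ i : Fin k, (i : ℕ) = k - 1 → p i.succ i.castSucc = lam / (1 + lam)) :
    ∏ i : Fin k, p i.castSucc i.succ / p i.succ i.castSucc
      = lam ^ (k - 1) * ∏ j ∈ Icc 1 (k - 1), (1 / r j) := by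
  cases k with
  | zero => simp
  | succ n =>
    rw [Fin.prod_univ_castSucc, hup, htop _ (by simp), div_self (by positivity), mul_one]
    have hlow : ∀ i : Fin n,
        p i.castSucc.castSucc i.castSucc.succ / p i.castSucc.succ i.castSucc.castSucc
          = lam * (1 / r ((i : ℕ) + 1)) := by
      intro i
      rw [hup, hdown _ (by simp), Fin.val_castSucc]
      field_simp
    simp_rw [hlow, prod_mul_distrib, prod_const, card_univ, Fintype.card_fin, Nat.add_sub_cancel]
    rw [Fin.prod_univ_eq_prod_range (fun j => 1 / r (j + 1)), range_eq_Ico,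
      prod_Ico_add' (fun j => 1 / r j) 0 n 1]
    rfl

end BirthDeath

theorem stmt6_general (k : ℕ) (lam : ℝ) (hlam : 0 < lam) (r : ℕ → ℝ)
    (hr : ∀ j, 1 ≤ j → j ≤ k - 1 → 0 < r j ∧ r j ≤ 1)
    (p : Fin (k + 1) → Fin (k + 1) → ℝ)
    (hp : ∀ i j, 0 ≤ p i j) (hst : ∀ i, ∑ j, p i j = 1)
    (hbd : ∀ i j : Fin (k + 1), (i : ℕ) ≠ j → (i : ℕ) + 1 ≠ j → (j : ℕ) + 1 ≠ i →
      p i j = 0)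
    (hup : ∀ i : Fin k, p i.castSucc i.succ = lam / (1 + lam))
    (hdown : ∀ i : Fin k, (i : ℕ) + 1 ≤ k - 1 →
      p i.succ i.castSucc = r ((i : ℕ) + 1) / (1 + lam))
    (htop : ∀ i : Fin k, (i : ℕ) = k - 1 → p i.succ i.castSucc = lam / (1 + lam)) :
    (∏ i : Fin k, p i.castSucc i.succ / p i.succ i.castSucc)
        ≤ lam ^ (k - 1) * ∏ j ∈ Finset.Icc 1 (k - 1), (1 / r j)
    ∧ ∀ M : ℕ, hitProb p 0 (Fin.last k) M
        ≤ M * lam ^ (k - 1) * ∏ j ∈ Finset.Icc 1 (k - 1), (1 / r j) := by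
  have hratio := prod_birthDeath_ratio_eq lam hlam r hup hdown htop
  have hdown_ne : ∀ i : Fin k, p i.succ i.castSucc ≠ 0 := by
    intro i
    by_cases hi : (i : ℕ) + 1 ≤ k - 1
    · rw [hdown i hi]
      exact (div_pos (hr _ le_add_self hi).1 (by positivity)).ne'
    · rw [htop i (by omega)]
      positivity
  refine ⟨hratio.le, fun M => ?_⟩
  have hhit := mul_hitProb_le_of_detailed_balance hp hst _ (reversibilityMeasure_nonneg hp)
    (reversibilityMeasure_detailed_balance hbd hdown_ne) 0 (Fin.last k) M
  rwa [reversibilityMeasure_zero, one_mul, reversibilityMeasure_last, hratio, ← mul_assoc] at hhit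

/-- For the birth-and-death chain on `{1, …, k+1}` (encoded as `Fin (k+1)`, index `i`
being state `i+1`) with upward probabilities `λ/(1+λ)`, downward probabilities
`r_j/(1+λ)` for `1 ≤ j ≤ k−1`, and reversibilized top `p(k+1,k) = λ/(1+λ)`,
the reversibility measure satisfies `ν(k+1) ≤ λ^{k−1} ∏_{j=1}^{k−1} 1/r_j`,
and `P_1(T_{k+1} ≤ M) ≤ M · λ^{k−1} ∏_{j=1}^{k−1} 1/r_j` for every `M`. -/
theorem stmt6 (k : ℕ) (hk : 1 ≤ k) (lam : ℝ) (hlam : 0 < lam) (r : ℕ → ℝ)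
    (hr : ∀ j, 1 ≤ j → j ≤ k - 1 → 0 < r j ∧ r j ≤ 1)
    (p : Fin (k + 1) → Fin (k + 1) → ℝ)
    (hp : ∀ i j, 0 ≤ p i j) (hst : ∀ i, ∑ j, p i j = 1)
    (hbd : ∀ i j : Fin (k + 1), (i : ℕ) ≠ j → (i : ℕ) + 1 ≠ j → (j : ℕ) + 1 ≠ i →
      p i j = 0)
    (hup : ∀ i : Fin k, p i.castSucc i.succ = lam / (1 + lam))
    (hdown : ∀ i : Fin k, (i : ℕ) + 1 ≤ k - 1 →
      p i.succ i.castSucc = r ((i : ℕ) + 1) / (1 + lam))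
    (htop : ∀ i : Fin k, (i : ℕ) = k - 1 → p i.succ i.castSucc = lam / (1 + lam)) :
    (∏ i : Fin k, p i.castSucc i.succ / p i.succ i.castSucc)
        ≤ lam ^ (k - 1) * ∏ j ∈ Finset.Icc 1 (k - 1), (1 / r j)
    ∧ ∀ M : ℕ, hitProb p 0 (Fin.last k) M
        ≤ M * lam ^ (k - 1) * ∏ j ∈ Finset.Icc 1 (k - 1), (1 / r j) :=
  stmt6_general k lam hlam r hr p hp hst hbd hup hdown htop
end
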